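/- (Row version of Parrott's theorem.) Let H₁, H₂, K be complex Hilbert spaces and let C : H₁ → K and D : H₂ → K be bounded operators. Then the row operator [C, D] : H₁ ⊕ H₂ → K is a contraction if and only if C is a contraction and there exists a contraction Y : H₂ → K such that D = D_{C*}·Y, where D_{C*} = (I − CC*)^{1/2}. -/

import Mathlib

/-!
The adjoint of `[C, D]` is the column `k ↦ (C* k, D* k)`, so `[C, D]` is a contraction iff
`‖C* k‖² + ‖D* k‖² ≤ ‖k‖²` for all `k`. As `D_{C*}` is self-adjoint with `D_{C*}² = I - CC*`,
`‖D_{C*} k‖² + ‖C* k‖² = ‖k‖²`; this forces `‖C‖ ≤ 1` and turns the condition into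
`‖D* k‖ ≤ ‖D_{C*} k‖`. By Douglas' lemma, this domination is equivalent to `D* = Z D_{C*}` for a
contraction `Z`, i.e. `D = D_{C*} Z*`.
-/

open ContinuousLinearMap

/-- The row operator `[C, D] : H₁ ⊕ H₂ → K`, where the direct sum carries the `ℓ²` norm. -/
noncomputable def rowOp {H₁ H₂ K : Type*}
    [NormedAddCommGroup H₁] [InnerProductSpace ℂ H₁]
    [NormedAddCommGroup H₂] [InnerProductSpace ℂ H₂]
    [NormedAddCommGroup K] [InnerProductSpace ℂ K]
    (C : H₁ →L[ℂ] K) (D : H₂ →L[ℂ] K) : WithLp 2 (H₁ × H₂) →L[ℂ] K :=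
  (C.coprod D) ∘L
    ((WithLp.prodContinuousLinearEquiv 2 ℂ H₁ H₂ : WithLp 2 (H₁ × H₂) →L[ℂ] H₁ × H₂))

theorem LinearMap.denseRange_codRestrict_topologicalClosure_range {R M N : Type*} [Semiring R]
    [AddCommMonoid M] [Module R M] [AddCommMonoid N] [Module R N] [TopologicalSpace N]
    [ContinuousAdd N] [ContinuousConstSMul R N] (f : M →ₗ[R] N) :
    DenseRange (f.codRestrict (LinearMap.range f).topologicalClosure
      fun x => (LinearMap.range f).le_topologicalClosure (LinearMap.mem_range_self f x)) := by
  intro y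
  rw [Topology.IsInducing.subtypeVal.closure_eq_preimage_closure_image, ← Set.range_comp]
  exact y.2

theorem ContinuousLinearMap.opNorm_le_one_iff_norm_apply_sq_le {𝕜 E F : Type*}
    [NontriviallyNormedField 𝕜] [SeminormedAddCommGroup E] [NormedSpace 𝕜 E]
    [SeminormedAddCommGroup F] [NormedSpace 𝕜 F] (T : E →L[𝕜] F) :
    ‖T‖ ≤ 1 ↔ ∀ x, ‖T x‖ ^ 2 ≤ ‖x‖ ^ 2 := by
  rw [opNorm_le_iff zero_le_one]
  simp only [one_mul, sq_le_sq₀ (norm_nonneg _) (norm_nonneg _)]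

section Douglas

variable {𝕜 K E H : Type*} [RCLike 𝕜]
  [NormedAddCommGroup K] [NormedSpace 𝕜 K]
  [NormedAddCommGroup E] [InnerProductSpace 𝕜 E] [CompleteSpace E]
  [NormedAddCommGroup H] [NormedSpace 𝕜 H] [CompleteSpace H]

theorem exists_norm_le_one_eq_comp_iff_norm_apply_le (A : K →L[𝕜] H) (B : K →L[𝕜] E) :
    (∃ Z : E →L[𝕜] H, ‖Z‖ ≤ 1 ∧ A = Z ∘L B) ↔ ∀ k, ‖A k‖ ≤ ‖B k‖ := by
  refine ⟨fun ⟨Z, hZ, hA⟩ k => hA ▸ by simpa using Z.le_of_opNorm_le hZ (B k), fun h => ?_⟩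
  set S := (LinearMap.range (B : K →ₗ[𝕜] E)).topologicalClosure
  set e := (B : K →ₗ[𝕜] E).codRestrict S
    fun x => (LinearMap.range _).le_topologicalClosure (LinearMap.mem_range_self _ x)
  have he : DenseRange e := LinearMap.denseRange_codRestrict_topologicalClosure_range _
  have hbound : ∀ k, ‖A k‖ ≤ 1 * ‖e k‖ := fun k => (one_mul ‖B k‖).symm ▸ h k
  have : CompleteSpace S := (Submodule.isClosed_topologicalClosure _).completeSpace_coe
  -- extend `B k ↦ A k` by continuity to the closure of the range, and by zero on its complement
  refine ⟨(A : K →ₗ[𝕜] H).extendOfNorm e ∘L S.orthogonalProjectionOnto, ?_, ?_⟩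
  · calc _ ≤ ‖(A : K →ₗ[𝕜] H).extendOfNorm e‖ * ‖S.orthogonalProjectionOnto‖ :=
          opNorm_comp_le _ _
      _ ≤ 1 * 1 := by
        gcongr
        exacts [LinearMap.opNorm_extendOfNorm_le he zero_le_one hbound,
          S.orthogonalProjectionOnto_norm_le]
      _ = 1 := one_mul 1
  · ext k
    have hproj : S.orthogonalProjectionOnto (B k) = e k :=
      S.orthogonalProjectionOnto_mem_subspace_eq_self (e k)
    simp [hproj, LinearMap.extendOfNorm_eq he ⟨1, hbound⟩]

end Douglas

section Hilbert

variable {𝕜 E F G : Type*} [RCLike 𝕜]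
  [NormedAddCommGroup E] [InnerProductSpace 𝕜 E] [CompleteSpace E]
  [NormedAddCommGroup F] [InnerProductSpace 𝕜 F] [CompleteSpace F]
  [NormedAddCommGroup G] [InnerProductSpace 𝕜 G] [CompleteSpace G]

theorem exists_norm_le_one_eq_comp_iff_norm_adjoint_apply_le (D : G →L[𝕜] F) (T : E →L[𝕜] F) :
    (∃ Y : G →L[𝕜] E, ‖Y‖ ≤ 1 ∧ D = T ∘L Y) ↔ ∀ k, ‖adjoint D k‖ ≤ ‖adjoint T k‖ := by
  rw [← exists_norm_le_one_eq_comp_iff_norm_apply_le]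
  constructor
  · rintro ⟨Y, hY, rfl⟩
    exact ⟨adjoint Y, by rwa [adjoint.norm_map], adjoint_comp T Y⟩
  · rintro ⟨Z, hZ, hD⟩
    refine ⟨adjoint Z, by rwa [adjoint.norm_map], ?_⟩
    rw [← adjoint_adjoint D, hD, adjoint_comp, adjoint_adjoint]

theorem norm_apply_sq_add_norm_apply_sq_eq (T : E →L[𝕜] F) (S : E →L[𝕜] G)
    (h : adjoint T ∘L T = 1 - adjoint S ∘L S) (x : E) : ‖T x‖ ^ 2 + ‖S x‖ ^ 2 = ‖x‖ ^ 2 := by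
  rw [apply_norm_sq_eq_inner_adjoint_left, apply_norm_sq_eq_inner_adjoint_left, h, ← map_add,
    ← inner_add_left]
  simp

end Hilbert

section Row

variable {H₁ H₂ K : Type*}
  [NormedAddCommGroup H₁] [InnerProductSpace ℂ H₁] [CompleteSpace H₁]
  [NormedAddCommGroup H₂] [InnerProductSpace ℂ H₂] [CompleteSpace H₂]
  [NormedAddCommGroup K] [InnerProductSpace ℂ K] [CompleteSpace K]

theorem adjoint_rowOp (C : H₁ →L[ℂ] K) (D : H₂ →L[ℂ] K) :
    adjoint (rowOp C D) = ((WithLp.prodContinuousLinearEquiv 2 ℂ H₁ H₂).symm :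
      H₁ × H₂ →L[ℂ] WithLp 2 (H₁ × H₂)) ∘L (adjoint C).prod (adjoint D) := by
  refine ((eq_adjoint_iff _ _).mpr fun k x => ?_).symm
  simp [rowOp, WithLp.prod_inner_apply, inner_add_right, adjoint_inner_left]

theorem norm_rowOp_le_one_iff (C : H₁ →L[ℂ] K) (D : H₂ →L[ℂ] K) :
    ‖rowOp C D‖ ≤ 1 ↔ ∀ k, ‖adjoint C k‖ ^ 2 + ‖adjoint D k‖ ^ 2 ≤ ‖k‖ ^ 2 := by
  rw [← adjoint.norm_map, opNorm_le_one_iff_norm_apply_sq_le, adjoint_rowOp]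
  simp only [comp_apply, WithLp.prod_norm_sq_eq_of_L2]
  rfl

end Row

theorem parrott_row
    {H₁ H₂ K : Type*}
    [NormedAddCommGroup H₁] [InnerProductSpace ℂ H₁] [CompleteSpace H₁]
    [NormedAddCommGroup H₂] [InnerProductSpace ℂ H₂] [CompleteSpace H₂]
    [NormedAddCommGroup K] [InnerProductSpace ℂ K] [CompleteSpace K]
    (C : H₁ →L[ℂ] K) (D : H₂ →L[ℂ] K)
    -- `DCstar` is the defect operator `D_{C*} = (I - CC*)^{1/2}`, i.e. the unique positive
    -- semidefinite square root of `I - CC*`: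
    (DCstar : K →L[ℂ] K) (hDCstar_pos : DCstar.IsPositive)
    (hDCstar_sq : DCstar ∘L DCstar = 1 - C ∘L (ContinuousLinearMap.adjoint C)) :
    ‖rowOp C D‖ ≤ 1 ↔
      (‖C‖ ≤ 1 ∧ ∃ Y : H₂ →L[ℂ] K, ‖Y‖ ≤ 1 ∧ D = DCstar ∘L Y) := by
  have hDCstar_sa : IsSelfAdjoint DCstar := hDCstar_pos.isSelfAdjoint
  have hdefect (k : K) : ‖DCstar k‖ ^ 2 + ‖adjoint C k‖ ^ 2 = ‖k‖ ^ 2 :=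
    norm_apply_sq_add_norm_apply_sq_eq DCstar (adjoint C)
      (by rw [hDCstar_sa.adjoint_eq, adjoint_adjoint, hDCstar_sq]) k
  have hC : ‖C‖ ≤ 1 := by
    rw [← adjoint.norm_map, opNorm_le_one_iff_norm_apply_sq_le]
    exact fun k => hdefect k ▸ le_add_of_nonneg_left (sq_nonneg _)
  rw [norm_rowOp_le_one_iff, exists_norm_le_one_eq_comp_iff_norm_adjoint_apply_le,
    hDCstar_sa.adjoint_eq]
  simp only [hC, true_and]
  refine forall_congr' fun k => ?_
  rw [← sq_le_sq₀ (norm_nonneg _) (norm_nonneg _), ← hdefect k, add_comm (‖DCstar k‖ ^ 2)]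
  exact add_le_add_iff_left _
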